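/- Closed-form expected return for the anti-periodic qubit model: let N ≥ 1 and x₊, x₋ ∈ ℝ. Define the step weight q(true,true) = 1−x₊, q(true,false) = x₊, q(false,true) = x₋, q(false,false) = 1−x₋. Then Σ over all binary trajectories ψ : Fin (N+1) → Bool with ψ(0) = true and ψ(N) = false of [(p(ψ)·x₊ − 1 − (N−p(ψ))·x₋) · ∏_{i<N} q(ψ(i), ψ(i+1))] equals Σ_{p=1}^{N} Σ_{c=1}^{min(p, N+1−p)} C(p−1, c−1)·C(N−p, c−1)·(p·x₊ − 1 − (N−p)·x₋)·x₊^c (1−x₊)^{p−c} x₋^{c−1} (1−x₋)^{N−p−c+1}. -/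

import Mathlib

/-!
The weight of a trajectory is a monomial in its numbers of `a → b` steps. For a trajectory
from `true` to `false` with `p` trues and `c` steps `true → false`, counting the steps into
and out of each state gives `c - 1` steps `false → true`, `p - c` steps `true → true` and
`N + 1 - p - c` steps `false → false`, so the weight depends only on `(p, c)`. The trues form
`c` runs and the falses form `c` runs, so such trajectories are pairs of compositions of `p`
and of `N + 1 - p` into `c` parts: there are `C(p-1, c-1) * C(N-p, c-1)` of them, which we
verify by appending one step at a time.
-/

open scoped BigOperators

/-- Step weight of the two-level model: `q(true,true) = 1−x₊`, `q(true,false) = x₊`,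
`q(false,true) = x₋`, `q(false,false) = 1−x₋`. -/
noncomputable def qubitStep (xp xm : ℝ) : Bool → Bool → ℝ
  | true, true => 1 - xp
  | true, false => xp
  | false, true => xm
  | false, false => 1 - xm

open Finset

theorem card_filter_snoc {α : Type*} [Fintype α] {n : ℕ} (P : (Fin (n + 2) → α) → Prop)
    [DecidablePred P] :
    #{ψ | P ψ} = ∑ φ : Fin (n + 1) → α, ∑ b, if P (Fin.snoc φ b) then 1 else 0 := by
  rw [card_filter, ← Fintype.sum_equiv (Fin.snocEquiv fun _ => α) _ _ fun _ => rfl,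
    Fintype.sum_prod_type_right]
  rfl

section Trajectory

variable {α : Type*} [DecidableEq α] {n : ℕ}

def visitCount (ψ : Fin (n + 1) → α) (a : α) : ℕ := #{i | ψ i = a}

def transitionCount (ψ : Fin (n + 1) → α) (a b : α) : ℕ :=
  #{i : Fin n | ψ i.castSucc = a ∧ ψ i.succ = b}

theorem prod_step_eq_prod_pow_transitionCount [Fintype α] {M : Type*} [CommMonoid M]
    (f : α → α → M) (ψ : Fin (n + 1) → α) :
    ∏ i : Fin n, f (ψ i.castSucc) (ψ i.succ)
      = ∏ ab : α × α, f ab.1 ab.2 ^ transitionCount ψ ab.1 ab.2 := by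
  rw [← prod_fiberwise' univ (fun i : Fin n => (ψ i.castSucc, ψ i.succ)) (fun ab => f ab.1 ab.2)]
  simp [prod_const, transitionCount, Prod.ext_iff]

theorem visitCount_eq_castSucc (ψ : Fin (n + 1) → α) (a : α) :
    visitCount ψ a = #{i : Fin n | ψ i.castSucc = a} + if ψ (Fin.last n) = a then 1 else 0 := by
  simp only [visitCount, card_filter, Fin.sum_univ_castSucc]

theorem visitCount_eq_succ (ψ : Fin (n + 1) → α) (a : α) :
    visitCount ψ a = #{i : Fin n | ψ i.succ = a} + if ψ 0 = a then 1 else 0 := by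
  simp only [visitCount, card_filter, Fin.sum_univ_succ, add_comm]

theorem sum_transitionCount_add_last [Fintype α] (ψ : Fin (n + 1) → α) (a : α) :
    ∑ b, transitionCount ψ a b + (if ψ (Fin.last n) = a then 1 else 0) = visitCount ψ a := by
  rw [visitCount_eq_castSucc, card_eq_sum_card_fiberwise (f := fun i : Fin n => ψ i.succ)
    (t := univ) (fun _ _ => mem_coe.2 (mem_univ _))]
  simp [transitionCount, filter_filter]

theorem sum_transitionCount_add_zero [Fintype α] (ψ : Fin (n + 1) → α) (b : α) :
    ∑ a, transitionCount ψ a b + (if ψ 0 = b then 1 else 0) = visitCount ψ b := by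
  rw [visitCount_eq_succ, card_eq_sum_card_fiberwise (f := fun i : Fin n => ψ i.castSucc)
    (t := univ) (fun _ _ => mem_coe.2 (mem_univ _))]
  simp [transitionCount, filter_filter, and_comm]

theorem sum_visitCount [Fintype α] (ψ : Fin (n + 1) → α) : ∑ a, visitCount ψ a = n + 1 := by
  rw [← Fintype.card_fin (n + 1), ← card_univ, card_eq_sum_card_fiberwise (f := ψ) (t := univ)
    (fun _ _ => mem_coe.2 (mem_univ _))]
  rfl

theorem visitCount_snoc (φ : Fin (n + 1) → α) (b a : α) :
    visitCount (Fin.snoc φ b : Fin (n + 2) → α) a = visitCount φ a + if b = a then 1 else 0 := by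
  rw [visitCount_eq_castSucc]
  simp [visitCount]

theorem transitionCount_snoc (φ : Fin (n + 1) → α) (b a a' : α) :
    transitionCount (Fin.snoc φ b : Fin (n + 2) → α) a a'
      = transitionCount φ a a' + if φ (Fin.last n) = a ∧ b = a' then 1 else 0 := by
  simp only [transitionCount, card_filter, Fin.sum_univ_castSucc, Fin.snoc_castSucc,
    Fin.succ_last, Fin.snoc_last, Fin.succ_castSucc]

end Trajectory

section Qubit

variable {n : ℕ}

theorem transitionCount_balance {ψ : Fin (n + 1) → Bool} (h₀ : ψ 0 = true)
    (hₙ : ψ (Fin.last n) = false) :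
    transitionCount ψ true true + transitionCount ψ true false = visitCount ψ true ∧
      transitionCount ψ false true + 1 = transitionCount ψ true false ∧
      visitCount ψ true + transitionCount ψ false true + transitionCount ψ false false + 1
        = n + 1 := by
  have out_true := sum_transitionCount_add_last ψ true
  have out_false := sum_transitionCount_add_last ψ false
  have in_true := sum_transitionCount_add_zero ψ true
  have total := sum_visitCount ψ
  rw [Fintype.sum_bool] at out_true out_false in_true total
  simp only [h₀, hₙ, Bool.false_eq_true, ↓reduceIte] at out_true out_false in_true
  omega

theorem prod_qubitStep_eq {ψ : Fin (n + 1) → Bool} (h₀ : ψ 0 = true)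
    (hₙ : ψ (Fin.last n) = false) (xp xm : ℝ) :
    ∏ i : Fin n, qubitStep xp xm (ψ i.castSucc) (ψ i.succ)
      = xp ^ transitionCount ψ true false
        * (1 - xp) ^ (visitCount ψ true - transitionCount ψ true false)
        * xm ^ (transitionCount ψ true false - 1)
        * (1 - xm) ^ (n + 1 - visitCount ψ true - transitionCount ψ true false) := by
  obtain ⟨h_true, h_false_true, h_false⟩ := transitionCount_balance h₀ hₙ
  rw [prod_step_eq_prod_pow_transitionCount, Fintype.prod_prod_type, Fintype.prod_bool,
    Fintype.prod_bool, Fintype.prod_bool, Nat.sub_eq_of_eq_add h_true.symm,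
    Nat.sub_eq_of_eq_add h_false_true.symm,
    show n + 1 - visitCount ψ true - transitionCount ψ true false
      = transitionCount ψ false false by omega]
  simp only [qubitStep]
  ring

def trajCount (n : ℕ) (b : Bool) (p c : ℕ) : ℕ :=
  #{ψ : Fin (n + 1) → Bool | ψ 0 = true ∧ ψ (Fin.last n) = b ∧ visitCount ψ true = p ∧
    transitionCount ψ true false = c}

theorem trajCount_succ (n : ℕ) (b : Bool) (p c : ℕ) :
    trajCount (n + 1) b p c = ∑ a : Bool, #{φ : Fin (n + 1) → Bool | φ 0 = true ∧
      φ (Fin.last n) = a ∧ visitCount φ true + b.toNat = p ∧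
      transitionCount φ true false + (a && !b).toNat = c} := by
  rw [trajCount, card_filter_snoc]
  simp only [card_filter]
  refine (sum_congr rfl fun φ _ => ?_).trans sum_comm
  simp only [Fintype.sum_bool, Fin.snoc_apply_zero, Fin.snoc_last, visitCount_snoc,
    transitionCount_snoc]
  cases b <;> cases φ (Fin.last n) <;> simp

end Qubit

section Counting

variable (n : ℕ)

theorem trajCount_zero (b : Bool) (p c : ℕ) :
    trajCount 0 b p c = if b = true ∧ p = 1 ∧ c = 0 then 1 else 0 := by
  rw [trajCount, card_filter, ← (Equiv.funUnique (Fin 1) Bool).symm.sum_comp, Fintype.sum_bool]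
  simp [visitCount, transitionCount, eq_comm]

theorem trajCount_succ_true_succ (p c : ℕ) :
    trajCount (n + 1) true (p + 1) c = trajCount n true p c + trajCount n false p c := by
  rw [trajCount_succ]
  simp [trajCount, add_comm]

theorem trajCount_succ_true_zero (c : ℕ) : trajCount (n + 1) true 0 c = 0 := by
  simp [trajCount_succ]

theorem trajCount_succ_false_succ (p c : ℕ) :
    trajCount (n + 1) false p (c + 1) = trajCount n false p (c + 1) + trajCount n true p c := by
  rw [trajCount_succ]
  simp [trajCount, add_comm]

theorem trajCount_false_zero (p : ℕ) : trajCount n false p 0 = 0 := by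
  refine card_eq_zero.2 (filter_eq_empty_iff.2 fun ψ _ ⟨h₀, hₙ, _, hc⟩ => ?_)
  have := (transitionCount_balance h₀ hₙ).2.1
  omega

theorem trajCount_true_zero (p : ℕ) : trajCount n true p 0 = if p = n + 1 then 1 else 0 := by
  induction n generalizing p with
  | zero => simp [trajCount_zero]
  | succ n ih =>
    cases p with
    | zero => simp [trajCount_succ_true_zero]
    | succ p => simp [trajCount_succ_true_succ, ih, trajCount_false_zero]

theorem trajCount_succ_eq_choose :
    (∀ p c, trajCount n false p (c + 1)
      = if 1 ≤ p ∧ p ≤ n then (p - 1).choose c * (n - p).choose c else 0) ∧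
    (∀ p c, trajCount n true p (c + 1)
      = if p ≤ n then (p - 1).choose (c + 1) * (n - p).choose c else 0) := by
  induction n with
  | zero =>
    refine ⟨fun p c => ?_, fun p c => ?_⟩ <;> rcases p with _ | p <;> simp [trajCount_zero]
  | succ n ih =>
    refine ⟨fun p c => ?_, fun p c => ?_⟩
    · rw [trajCount_succ_false_succ, ih.1]
      cases c with
      | zero =>
        rw [trajCount_true_zero]
        simp only [Nat.choose_zero_right, mul_one]
        split_ifs <;> omega
      | succ c =>
        rw [ih.2]
        by_cases hpn : p ≤ n
        · rw [show n + 1 - p = n - p + 1 by omega, Nat.choose_succ_succ']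
          rcases p with _ | p
          · simp
          · simp [hpn, (by omega : p ≤ n), mul_add, add_comm]
        · have : n + 1 - p = 0 := by omega
          simp [hpn, this]
    · cases p with
      | zero => simp [trajCount_succ_true_zero]
      | succ p =>
        rw [trajCount_succ_true_succ, ih.1, ih.2, Nat.add_sub_cancel, Nat.add_sub_add_right]
        rcases p with _ | p
        · simp
        · by_cases hpn : p + 1 ≤ n
          · simp [hpn, Nat.choose_succ_succ', add_mul]; ring
          · simp [hpn]

end Counting

theorem trajCount_false_eq_choose {n p c : ℕ} (hp : 1 ≤ p) (hpn : p ≤ n) (hc : 1 ≤ c) :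
    trajCount n false p c = (p - 1).choose (c - 1) * (n - p).choose (c - 1) := by
  obtain ⟨c, rfl⟩ := Nat.exists_eq_add_of_le' hc
  rw [(trajCount_succ_eq_choose n).1, if_pos ⟨hp, hpn⟩, Nat.add_sub_cancel]

theorem sum_trajectories_eq_sum_trajCount {M : Type*} [AddCommMonoid M] (N : ℕ)
    (f : ℕ → ℕ → M) :
    ∑ ψ ∈ univ.filter (fun ψ : Fin (N + 1) → Bool => ψ 0 = true ∧ ψ (Fin.last N) = false),
        f (visitCount ψ true) (transitionCount ψ true false)
      = ∑ p ∈ Icc 1 N, ∑ c ∈ Icc 1 (min p (N + 1 - p)), trajCount N false p c • f p c := by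
  rw [← sum_fiberwise_of_maps_to (g := (visitCount · true)) (t := Icc 1 N) ?_]
  · refine sum_congr rfl fun p _ => ?_
    rw [← sum_fiberwise_of_maps_to (g := (transitionCount · true false))
      (t := Icc 1 (min p (N + 1 - p))) ?_]
    · refine sum_congr rfl fun c _ => ?_
      rw [sum_congr rfl fun ψ hψ => by rw [(mem_filter.1 (mem_filter.1 hψ).1).2,
        (mem_filter.1 hψ).2], sum_const, filter_filter, filter_filter]
      simp only [trajCount, and_assoc]
    · intro ψ hψ
      simp only [mem_filter, mem_univ, true_and] at hψ
      obtain ⟨⟨h₀, hₙ⟩, rfl⟩ := hψ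
      have := transitionCount_balance h₀ hₙ
      simp only [mem_Icc, le_min_iff]
      omega
  · intro ψ hψ
    simp only [mem_filter, mem_univ, true_and] at hψ
    have := transitionCount_balance hψ.1 hψ.2
    simp only [mem_Icc]
    omega

theorem antiperiodic_expected_return_general (N : ℕ) (xp xm : ℝ) :
    ∑ ψ ∈ Finset.univ.filter (fun ψ : Fin (N + 1) → Bool =>
        ψ 0 = true ∧ ψ (Fin.last N) = false),
      (((Finset.univ.filter (fun i : Fin (N + 1) => ψ i = true)).card : ℝ) * xp - 1
          - ((N : ℝ)
              - ((Finset.univ.filter (fun i : Fin (N + 1) => ψ i = true)).card : ℝ)) * xm)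
        * ∏ i : Fin N, qubitStep xp xm (ψ i.castSucc) (ψ i.succ)
    = ∑ p ∈ Finset.Icc 1 N, ∑ c ∈ Finset.Icc 1 (min p (N + 1 - p)),
        ((Nat.choose (p - 1) (c - 1) * Nat.choose (N - p) (c - 1) : ℕ) : ℝ)
          * ((p : ℝ) * xp - 1 - ((N : ℝ) - (p : ℝ)) * xm)
          * xp ^ c * (1 - xp) ^ (p - c) * xm ^ (c - 1) * (1 - xm) ^ (N + 1 - p - c) := by
  let term (p c : ℕ) : ℝ := ((p : ℝ) * xp - 1 - ((N : ℝ) - (p : ℝ)) * xm)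
    * (xp ^ c * (1 - xp) ^ (p - c) * xm ^ (c - 1) * (1 - xm) ^ (N + 1 - p - c))
  calc _ = ∑ ψ ∈ univ.filter (fun ψ : Fin (N + 1) → Bool =>
          ψ 0 = true ∧ ψ (Fin.last N) = false),
        term (visitCount ψ true) (transitionCount ψ true false) := by
        refine sum_congr rfl fun ψ hψ => ?_
        obtain ⟨h₀, hₙ⟩ := (mem_filter.1 hψ).2
        rw [prod_qubitStep_eq h₀ hₙ]
        rfl
    _ = ∑ p ∈ Icc 1 N, ∑ c ∈ Icc 1 (min p (N + 1 - p)), trajCount N false p c • term p c :=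
        sum_trajectories_eq_sum_trajCount N term
    _ = _ := by
        refine sum_congr rfl fun p hp => sum_congr rfl fun c hc => ?_
        rw [mem_Icc] at hp hc
        rw [trajCount_false_eq_choose hp.1 hp.2 hc.1, nsmul_eq_mul]
        ring

/-- Closed-form expected return for the anti-periodic qubit model: the brute-force sum over
all binary trajectories starting at `true` and ending at `false` equals the combinatorial
double sum. -/
theorem antiperiodic_expected_return (N : ℕ) (hN : 1 ≤ N) (xp xm : ℝ) :
    ∑ ψ ∈ Finset.univ.filter (fun ψ : Fin (N + 1) → Bool =>
        ψ 0 = true ∧ ψ (Fin.last N) = false),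
      (((Finset.univ.filter (fun i : Fin (N + 1) => ψ i = true)).card : ℝ) * xp - 1
          - ((N : ℝ)
              - ((Finset.univ.filter (fun i : Fin (N + 1) => ψ i = true)).card : ℝ)) * xm)
        * ∏ i : Fin N, qubitStep xp xm (ψ i.castSucc) (ψ i.succ)
    = ∑ p ∈ Finset.Icc 1 N, ∑ c ∈ Finset.Icc 1 (min p (N + 1 - p)),
        ((Nat.choose (p - 1) (c - 1) * Nat.choose (N - p) (c - 1) : ℕ) : ℝ)
          * ((p : ℝ) * xp - 1 - ((N : ℝ) - (p : ℝ)) * xm)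
          * xp ^ c * (1 - xp) ^ (p - c) * xm ^ (c - 1) * (1 - xm) ^ (N + 1 - p - c) :=
  antiperiodic_expected_return_general N xp xm
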